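/- arXiv:1902.02458 — 4 statements merged into one kernel-verified Lean document; each statement's English description precedes it below -/
import Mathlib

section
/- Let X be a locally compact Hausdorff space and let μ be a deficient topological measure on X that is finitely subadditive on open sets: μ(U ∪ V) ≤ μ(U) + μ(V) for all open U, V. Define μ*(E) = inf{μ(U) : E ⊆ U, U open} for every subset E of X. Then: (i) μ* is an outer measure on X (μ*(∅)=0, μ* is monotone and countably subadditive); (ii) a subset E of X is μ*-measurable (Carathéodory measurable) if and only if μ(U) ≥ μ*(U ∩ E) + μ*(U \ E) for every open set U; (iii) every closed subset of X is μ*-measurable. -/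
open Set Classical
open scoped ENNReal NNReal

variable {X : Type*}

/-- A deficient topological measure on a locally compact space `X`: a set function on open
and closed subsets of `X` with values in `[0,∞]`, not identically `∞`, finitely additive on
compact sets, inner compact regular on open sets, and outer regular on closed sets.
(Values on sets that are neither open nor closed are irrelevant.) -/
def IsDTM [TopologicalSpace X] (ν : Set X → ℝ≥0∞) : Prop :=
  (∃ A : Set X, (IsOpen A ∨ IsClosed A) ∧ ν A ≠ ⊤) ∧
  (∀ C K : Set X, IsCompact C → IsCompact K → Disjoint C K → ν (C ∪ K) = ν C + ν K) ∧
  (∀ U : Set X, IsOpen U → ν U = ⨆ (K : Set X) (_ : IsCompact K ∧ K ⊆ U), ν K) ∧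
  (∀ F : Set X, IsClosed F → ν F = ⨅ (U : Set X) (_ : IsOpen U ∧ F ⊆ U), ν U)

/-- The induced outer set function `μ*(E) = inf{μ(U) : E ⊆ U, U open}`. -/
noncomputable def outerOf [TopologicalSpace X] (μ : Set X → ℝ≥0∞) (E : Set X) : ℝ≥0∞ :=
  ⨅ (U : Set X) (_ : IsOpen U ∧ E ⊆ U), μ U

section helpers
variable [TopologicalSpace X] {μ : Set X → ℝ≥0∞}

lemma DTM_compact_le_open (hμ : IsDTM μ) {K U : Set X} (hK : IsCompact K)
    (hU : IsOpen U) (hKU : K ⊆ U) : μ K ≤ μ U := by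
  rw [hμ.2.2.1 U hU]
  exact le_iSup₂ (f := fun (K : Set X) (_ : IsCompact K ∧ K ⊆ U) => μ K) K ⟨hK, hKU⟩

lemma DTM_mono_open (hμ : IsDTM μ) {U V : Set X} (hU : IsOpen U) (hV : IsOpen V)
    (hUV : U ⊆ V) : μ U ≤ μ V := by
  rw [hμ.2.2.1 U hU]
  exact iSup₂_le fun K ⟨hK, hKU⟩ => DTM_compact_le_open hμ hK hV (hKU.trans hUV)

lemma DTM_empty (hμ : IsDTM μ) : μ ∅ = 0 := by
  have hfin : μ (∅ : Set X) ≠ ⊤ := by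
    obtain ⟨A, hA, hAfin⟩ := hμ.1
    rcases hA with hA | hA
    · exact fun h => hAfin (top_le_iff.mp (h ▸ DTM_compact_le_open hμ isCompact_empty hA (empty_subset A)))
    · rw [hμ.2.2.2 A hA] at hAfin
      obtain ⟨U, h1, h2⟩ : ∃ U : Set X, IsOpen U ∧ μ U ≠ ⊤ := by
        by_contra h
        push_neg at h
        apply hAfin
        simp only [iInf_eq_top]
        exact fun U hU => h U hU.1
      exact fun h => h2 (top_le_iff.mp (h ▸ DTM_compact_le_open hμ isCompact_empty h1 (empty_subset U)))
  have h2 : μ (∅ : Set X) = μ ∅ + μ ∅ := by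
    have := hμ.2.1 ∅ ∅ isCompact_empty isCompact_empty (disjoint_bot_left)
    simpa using this
  have h3 : μ (∅:Set X) + 0 = μ ∅ + μ ∅ := by simpa using h2
  exact ((ENNReal.add_right_inj hfin).mp h3).symm

end helpers

section more
variable [TopologicalSpace X] {μ : Set X → ℝ≥0∞}

lemma outerOf_le_open {E U : Set X} (hU : IsOpen U) (hEU : E ⊆ U) : outerOf μ E ≤ μ U :=
  iInf₂_le (f := fun (U : Set X) (_ : IsOpen U ∧ E ⊆ U) => μ U) U ⟨hU, hEU⟩

lemma outerOf_open (hμ : IsDTM μ) {U : Set X} (hU : IsOpen U) : outerOf μ U = μ U := by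
  refine le_antisymm (outerOf_le_open hU subset_rfl) (le_iInf₂ fun V ⟨hV, hUV⟩ => ?_)
  exact DTM_mono_open hμ hU hV hUV

lemma outerOf_mono {A B : Set X} (hAB : A ⊆ B) : outerOf μ A ≤ outerOf μ B :=
  le_iInf₂ fun U ⟨hU, hBU⟩ => outerOf_le_open hU (hAB.trans hBU)

lemma outerOf_empty (hμ : IsDTM μ) : outerOf μ (∅ : Set X) = 0 := by
  rw [← le_zero_iff, ← DTM_empty hμ]
  exact outerOf_le_open isOpen_empty (empty_subset _)

lemma outerOf_union_le (hμ : IsDTM μ)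
    (hsub : ∀ U V : Set X, IsOpen U → IsOpen V → μ (U ∪ V) ≤ μ U + μ V)
    (A B : Set X) : outerOf μ (A ∪ B) ≤ outerOf μ A + outerOf μ B := by
  simp only [outerOf]
  simp only [ENNReal.iInf_add, ENNReal.add_iInf]
  refine le_iInf₂ fun U ⟨hU, hBU⟩ => le_iInf₂ fun V ⟨hV, hAV⟩ => ?_
  exact (outerOf_le_open (hV.union hU) (union_subset_union hAV hBU)).trans (hsub V U hV hU)

end more

section more2
variable [TopologicalSpace X] {μ : Set X → ℝ≥0∞}

lemma mu_iUnion_le (hμ : IsDTM μ)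
    (hsub : ∀ U V : Set X, IsOpen U → IsOpen V → μ (U ∪ V) ≤ μ U + μ V)
    (U : ℕ → Set X) (hU : ∀ n, IsOpen (U n)) :
    μ (⋃ n, U n) ≤ ∑' n, μ (U n) := by
  rw [hμ.2.2.1 _ (isOpen_iUnion hU)]
  refine iSup₂_le fun K ⟨hK, hKU⟩ => ?_
  obtain ⟨t, ht⟩ := hK.elim_finite_subcover U hU hKU
  have hfin : ∀ s : Finset ℕ, μ (⋃ i ∈ s, U i) ≤ ∑ i ∈ s, μ (U i) := by
    intro s
    induction s using Finset.induction_on with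
    | empty => simp [DTM_empty hμ]
    | @insert a s ha ih =>
      rw [Finset.set_biUnion_insert, Finset.sum_insert ha]
      exact ((hsub _ _ (hU a) (isOpen_biUnion fun i _ => hU i)).trans (add_le_add le_rfl ih))
  calc μ K ≤ μ (⋃ i ∈ t, U i) :=
        DTM_compact_le_open hμ hK (isOpen_biUnion fun i _ => hU i) ht
    _ ≤ ∑ i ∈ t, μ (U i) := hfin t
    _ ≤ ∑' n, μ (U n) := ENNReal.sum_le_tsum t

lemma outerOf_iUnion_le (hμ : IsDTM μ)
    (hsub : ∀ U V : Set X, IsOpen U → IsOpen V → μ (U ∪ V) ≤ μ U + μ V)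
    (E : ℕ → Set X) : outerOf μ (⋃ n, E n) ≤ ∑' n, outerOf μ (E n) := by
  refine ENNReal.le_of_forall_pos_le_add fun ε hε hfin => ?_
  have hfin' : ∀ n, outerOf μ (E n) ≠ ⊤ := fun n =>
    ne_top_of_le_ne_top hfin.ne (ENNReal.le_tsum n)
  obtain ⟨δ, hδpos, hδsum⟩ :=
    ENNReal.exists_pos_sum_of_countable (ε := (ε : ℝ≥0∞)) (by exact_mod_cast hε.ne') ℕ
  have hex : ∀ n, ∃ U : Set X, (IsOpen U ∧ E n ⊆ U) ∧ μ U ≤ outerOf μ (E n) + δ n := by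
    intro n
    have h1 : outerOf μ (E n) < outerOf μ (E n) + δ n :=
      ENNReal.lt_add_right (hfin' n) (by exact_mod_cast (hδpos n).ne')
    rw [outerOf] at h1
    nth_rewrite 1 [iInf_lt_iff] at h1
    obtain ⟨U, hU⟩ := h1
    rw [iInf_lt_iff] at hU
    obtain ⟨hP, hlt⟩ := hU
    exact ⟨U, hP, hlt.le⟩
  choose U hP hle using hex
  calc outerOf μ (⋃ n, E n)
      ≤ μ (⋃ n, U n) := outerOf_le_open (isOpen_iUnion fun n => (hP n).1)
        (iUnion_mono fun n => (hP n).2)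
    _ ≤ ∑' n, μ (U n) := mu_iUnion_le hμ hsub U fun n => (hP n).1
    _ ≤ ∑' n, (outerOf μ (E n) + δ n) := ENNReal.tsum_le_tsum hle
    _ = (∑' n, outerOf μ (E n)) + ∑' n, (δ n : ℝ≥0∞) := ENNReal.tsum_add
    _ ≤ (∑' n, outerOf μ (E n)) + ε := add_le_add le_rfl hδsum.le

end more2

section more3
variable [TopologicalSpace X] [T2Space X] {μ : Set X → ℝ≥0∞}

lemma closed_key (hμ : IsDTM μ) {F U : Set X} (hF : IsClosed F) (hU : IsOpen U) :
    outerOf μ (U ∩ F) + outerOf μ (U \ F) ≤ μ U := by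
  by_cases htop : μ U = ⊤
  · simp [htop]
  have hUF : IsOpen (U \ F) := hU.sdiff hF
  rw [outerOf_open hμ hUF]
  set a := outerOf μ (U ∩ F) with ha_def
  have ha : a ≤ μ U := outerOf_le_open hU inter_subset_left
  have ha' : a ≠ ⊤ := fun h => htop (top_le_iff.mp (h ▸ ha))
  have key : μ (U \ F) ≤ μ U - a := by
    rw [hμ.2.2.1 _ hUF]
    refine iSup₂_le fun K ⟨hK, hKs⟩ => ?_
    have hKU : μ K ≤ μ U := DTM_compact_le_open hμ hK hU (hKs.trans diff_subset)
    have hKfin : μ K ≠ ⊤ := fun h => htop (top_le_iff.mp (h ▸ hKU))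
    -- a + μ K ≤ μ U
    have step : a + μ K ≤ μ U := by
      have h1 : a ≤ μ (U \ K) :=
        outerOf_le_open (hU.sdiff hK.isClosed)
          (fun x hx => ⟨hx.1, fun hxK => (hKs hxK).2 hx.2⟩)
      have h2 : μ (U \ K) ≤ μ U - μ K := by
        rw [hμ.2.2.1 _ (hU.sdiff hK.isClosed)]
        refine iSup₂_le fun C ⟨hC, hCs⟩ => ?_
        have hdisj : Disjoint C K := disjoint_left.mpr fun x hx => (hCs hx).2
        have : μ C + μ K ≤ μ U := by
          rw [← hμ.2.1 C K hC hK hdisj]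
          exact DTM_compact_le_open hμ (hC.union hK) hU
            (union_subset (hCs.trans diff_subset) (hKs.trans diff_subset))
        exact ENNReal.le_sub_of_add_le_right hKfin this
      calc a + μ K ≤ (μ U - μ K) + μ K := add_le_add (h1.trans h2) le_rfl
        _ = μ U := tsub_add_cancel_of_le hKU
    exact ENNReal.le_sub_of_add_le_left ha' step
  calc a + μ (U \ F) ≤ a + (μ U - a) := add_le_add le_rfl key
    _ = μ U := add_tsub_cancel_of_le ha

end more3

/-- Lemma 4.5: if `μ` is a deficient topological measure on a locally compact Hausdorff space
that is finitely subadditive on open sets, then (i) `μ*` is an outer measure; (ii) a set `E`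
is `μ*`-measurable (Carathéodory) iff `μ(U) ≥ μ*(U ∩ E) + μ*(U \ E)` for every open `U`;
(iii) every closed set is `μ*`-measurable. -/
theorem outerOf_outer_measure
    [TopologicalSpace X] [LocallyCompactSpace X] [T2Space X]
    (μ : Set X → ℝ≥0∞) (hμ : IsDTM μ)
    (hsub : ∀ U V : Set X, IsOpen U → IsOpen V → μ (U ∪ V) ≤ μ U + μ V) :
    (outerOf μ (∅ : Set X) = 0 ∧
      (∀ A B : Set X, A ⊆ B → outerOf μ A ≤ outerOf μ B) ∧
      (∀ E : ℕ → Set X, outerOf μ (⋃ n, E n) ≤ ∑' n, outerOf μ (E n))) ∧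
    (∀ E : Set X,
      (∀ A : Set X, outerOf μ A = outerOf μ (A ∩ E) + outerOf μ (A \ E)) ↔
      (∀ U : Set X, IsOpen U → outerOf μ (U ∩ E) + outerOf μ (U \ E) ≤ μ U)) ∧
    (∀ F : Set X, IsClosed F →
      ∀ A : Set X, outerOf μ A = outerOf μ (A ∩ F) + outerOf μ (A \ F)) := by
  have hii : ∀ E : Set X,
      (∀ A : Set X, outerOf μ A = outerOf μ (A ∩ E) + outerOf μ (A \ E)) ↔
      (∀ U : Set X, IsOpen U → outerOf μ (U ∩ E) + outerOf μ (U \ E) ≤ μ U) := by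
    intro E
    constructor
    · intro h U hU
      rw [← h U, outerOf_open hμ hU]
    · intro h A
      refine le_antisymm ?_ ?_
      · have := outerOf_union_le hμ hsub (A ∩ E) (A \ E)
        rwa [inter_union_diff] at this
      · refine le_iInf₂ fun U ⟨hUo, hAU⟩ => ?_
        calc outerOf μ (A ∩ E) + outerOf μ (A \ E)
            ≤ outerOf μ (U ∩ E) + outerOf μ (U \ E) :=
              add_le_add (outerOf_mono (inter_subset_inter_left _ hAU))
                (outerOf_mono (diff_subset_diff_left hAU))
          _ ≤ μ U := h U hUo
  exact ⟨⟨outerOf_empty hμ, fun A B h => outerOf_mono h,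
    fun E => outerOf_iUnion_le hμ hsub E⟩, hii,
    fun F hF A => (hii F).mpr (fun U hU => closed_key hμ hF hU) A⟩
end

section
/- Let X be a locally compact Hausdorff space and let μ be a deficient topological measure on X that is finitely subadditive on open sets (μ(U ∪ V) ≤ μ(U) + μ(V) for all open U, V). Then μ admits a unique extension to a Borel measure m on the Borel σ-algebra of X that is outer regular on all Borel sets (m(E) = inf{m(U) : E ⊆ U, U open}) and inner regular on open sets (m(U) = sup{m(K) : K ⊆ U, K compact}), with m(A) = μ(A) for every open or closed set A. Moreover m is compact-finite (hence a Radon measure) if and only if μ is compact-finite. -/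
/-!
Extend `μ` to all sets by `E ↦ ⨅ {μ U | U open, E ⊆ U}`. By compactness, inner regularity turns
finite subadditivity on open sets into countable subadditivity, so this is an outer measure, and it
agrees with `μ` on open sets by monotonicity and on closed sets by outer regularity. Open sets `U`
are Carathéodory measurable: for open `V` and compact `K ⊆ V ∩ U`, additivity on compact sets and
inner regularity of `V \ K` give `μ K + μ (V \ K) ≤ μ V`, and `V \ U ⊆ V \ K`. The resulting Borel
measure is outer regular, and an outer regular measure is determined by its values on open sets.
-/

open Set Classical
open scoped ENNReal NNReal

variable {X : Type*}

open MeasureTheory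

namespace IsDTM

variable [TopologicalSpace X] {μ : Set X → ℝ≥0∞}

theorem union_of_disjoint (hμ : IsDTM μ) {C K : Set X} (hC : IsCompact C) (hK : IsCompact K)
    (hCK : Disjoint C K) : μ (C ∪ K) = μ C + μ K :=
  hμ.2.1 C K hC hK hCK

theorem eq_iSup_of_isOpen (hμ : IsDTM μ) {U : Set X} (hU : IsOpen U) :
    μ U = ⨆ (K : Set X) (_ : IsCompact K ∧ K ⊆ U), μ K :=
  hμ.2.2.1 U hU

theorem eq_iInf_of_isClosed (hμ : IsDTM μ) {F : Set X} (hF : IsClosed F) :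
    μ F = ⨅ (U : Set X) (_ : IsOpen U ∧ F ⊆ U), μ U :=
  hμ.2.2.2 F hF

theorem le_of_isClosed_of_isOpen (hμ : IsDTM μ) {F U : Set X} (hF : IsClosed F) (hU : IsOpen U)
    (hFU : F ⊆ U) : μ F ≤ μ U :=
  hμ.eq_iInf_of_isClosed hF ▸ iInf₂_le U ⟨hU, hFU⟩

theorem exists_isOpen_ne_top (hμ : IsDTM μ) : ∃ U : Set X, IsOpen U ∧ μ U ≠ ⊤ := by
  obtain ⟨A, hA | hA, hAtop⟩ := hμ.1
  · exact ⟨A, hA, hAtop⟩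
  · by_contra! h
    refine hAtop (top_le_iff.1 ?_)
    rw [hμ.eq_iInf_of_isClosed hA]
    exact le_iInf₂ fun U hU => (h U hU.1).ge

theorem empty (hμ : IsDTM μ) : μ ∅ = 0 := by
  obtain ⟨U, hU, hUtop⟩ := hμ.exists_isOpen_ne_top
  have hfin : μ ∅ ≠ ⊤ := ne_top_of_le_ne_top hUtop
    (hμ.le_of_isClosed_of_isOpen isClosed_empty hU (empty_subset U))
  have h := hμ.union_of_disjoint isCompact_empty isCompact_empty (disjoint_empty ∅)
  rw [union_empty] at h
  exact (ENNReal.add_right_inj hfin).1 (h.symm.trans (add_zero _).symm)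

variable [T2Space X]

theorem mono_of_isOpen (hμ : IsDTM μ) {U V : Set X} (hU : IsOpen U) (hV : IsOpen V)
    (hUV : U ⊆ V) : μ U ≤ μ V := by
  rw [hμ.eq_iSup_of_isOpen hU]
  exact iSup₂_le fun K hK => hμ.le_of_isClosed_of_isOpen hK.1.isClosed hV (hK.2.trans hUV)

theorem add_diff_le (hμ : IsDTM μ) {K V : Set X} (hK : IsCompact K) (hV : IsOpen V)
    (hKV : K ⊆ V) : μ K + μ (V \ K) ≤ μ V := by
  rw [hμ.eq_iSup_of_isOpen (hV.sdiff hK.isClosed), ENNReal.add_iSup]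
  refine iSup_le fun L => ?_
  by_cases hL : IsCompact L ∧ L ⊆ V \ K
  · rw [iSup_pos hL, ← hμ.union_of_disjoint hK hL.1 (subset_sdiff.1 hL.2).2.symm]
    exact hμ.le_of_isClosed_of_isOpen (hK.union hL.1).isClosed hV
      (union_subset hKV (hL.2.trans sdiff_subset))
  · rw [iSup_neg hL, bot_eq_zero, add_zero]
    exact hμ.le_of_isClosed_of_isOpen hK.isClosed hV hKV

variable (hsub : ∀ U V : Set X, IsOpen U → IsOpen V → μ (U ∪ V) ≤ μ U + μ V)
include hsub

omit [T2Space X] in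
theorem biUnion_finset_le_sum (hμ : IsDTM μ) {ι : Type*} {U : ι → Set X}
    (hU : ∀ i, IsOpen (U i)) (t : Finset ι) : μ (⋃ i ∈ t, U i) ≤ ∑ i ∈ t, μ (U i) := by
  induction t using Finset.induction_on with
  | empty => simp [hμ.empty]
  | insert a t hat ih =>
    rw [Finset.set_biUnion_insert, Finset.sum_insert hat]
    exact (hsub _ _ (hU a) (isOpen_biUnion fun i _ => hU i)).trans (add_le_add le_rfl ih)

theorem iUnion_le_tsum (hμ : IsDTM μ) {U : ℕ → Set X} (hU : ∀ n, IsOpen (U n)) :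
    μ (⋃ n, U n) ≤ ∑' n, μ (U n) := by
  rw [hμ.eq_iSup_of_isOpen (isOpen_iUnion hU)]
  refine iSup₂_le fun K hK => ?_
  obtain ⟨t, hKt⟩ := hK.1.elim_finite_subcover U hU hK.2
  calc μ K ≤ μ (⋃ i ∈ t, U i) :=
        hμ.le_of_isClosed_of_isOpen hK.1.isClosed (isOpen_biUnion fun i _ => hU i) hKt
    _ ≤ ∑ i ∈ t, μ (U i) := hμ.biUnion_finset_le_sum hsub hU t
    _ ≤ ∑' i, μ (U i) := ENNReal.sum_le_tsum t

omit hsub in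
noncomputable def outerMeasure (hμ : IsDTM μ) : OuterMeasure X :=
  inducedOuterMeasure (fun U (_ : IsOpen U) => μ U) isOpen_empty hμ.empty

theorem outerMeasure_apply (hμ : IsDTM μ) (E : Set X) :
    hμ.outerMeasure E = ⨅ (U : Set X) (_ : IsOpen U ∧ E ⊆ U), μ U := by
  rw [outerMeasure, inducedOuterMeasure_eq_iInf (fun _ => isOpen_iUnion)
    (fun _ => hμ.iUnion_le_tsum hsub) (fun _ _ => hμ.mono_of_isOpen), iInf_congr fun U => iInf_and]

theorem outerMeasure_of_isOpen (hμ : IsDTM μ) {U : Set X} (hU : IsOpen U) :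
    hμ.outerMeasure U = μ U :=
  inducedOuterMeasure_eq' (fun _ => isOpen_iUnion) (fun _ => hμ.iUnion_le_tsum hsub)
    (fun _ _ => hμ.mono_of_isOpen) hU

theorem outerMeasure_of_isClosed (hμ : IsDTM μ) {F : Set X} (hF : IsClosed F) :
    hμ.outerMeasure F = μ F := by
  rw [hμ.outerMeasure_apply hsub, hμ.eq_iInf_of_isClosed hF]

theorem isCaratheodory_of_isOpen (hμ : IsDTM μ) {U : Set X} (hU : IsOpen U) :
    MeasurableSet[hμ.outerMeasure.caratheodory] U := by
  rw [outerMeasure, inducedOuterMeasure_caratheodory (fun _ => isOpen_iUnion)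
    (fun _ => hμ.iUnion_le_tsum hsub) (fun _ _ => hμ.mono_of_isOpen)]
  intro V hV
  change hμ.outerMeasure (V ∩ U) + hμ.outerMeasure (V \ U) ≤ hμ.outerMeasure V
  rw [hμ.outerMeasure_of_isOpen hsub (hV.inter hU),
    hμ.outerMeasure_of_isOpen hsub hV, hμ.eq_iSup_of_isOpen (hV.inter hU),
    ENNReal.biSup_add' ⟨∅, isCompact_empty, empty_subset _⟩]
  refine iSup₂_le fun K ⟨hK, hKVU⟩ => ?_
  have hVK : IsOpen (V \ K) := hV.sdiff hK.isClosed
  calc μ K + hμ.outerMeasure (V \ U)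
      ≤ μ K + hμ.outerMeasure (V \ K) :=
        add_le_add le_rfl (measure_mono (sdiff_subset_sdiff_right (hKVU.trans inter_subset_right)))
    _ = μ K + μ (V \ K) := by rw [hμ.outerMeasure_of_isOpen hsub hVK]
    _ ≤ μ V := hμ.add_diff_le hK hV (hKVU.trans inter_subset_left)

variable [MeasurableSpace X] [BorelSpace X]

theorem borel_le_caratheodory (hμ : IsDTM μ) :
    ‹MeasurableSpace X› ≤ hμ.outerMeasure.caratheodory := by
  rw [BorelSpace.measurable_eq (α := X)]
  exact MeasurableSpace.generateFrom_le fun _ => hμ.isCaratheodory_of_isOpen hsub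

noncomputable def toMeasure (hμ : IsDTM μ) : Measure X :=
  hμ.outerMeasure.toMeasure (hμ.borel_le_caratheodory hsub)

theorem toMeasure_apply (hμ : IsDTM μ) {E : Set X} (hE : MeasurableSet E) :
    hμ.toMeasure hsub E = ⨅ (U : Set X) (_ : IsOpen U ∧ E ⊆ U), μ U := by
  rw [toMeasure, MeasureTheory.toMeasure_apply _ _ hE, hμ.outerMeasure_apply hsub]

theorem toMeasure_of_isOpen_or_isClosed (hμ : IsDTM μ) {A : Set X} (hA : IsOpen A ∨ IsClosed A) :
    hμ.toMeasure hsub A = μ A := by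
  rcases hA with hA | hA
  · rw [toMeasure, MeasureTheory.toMeasure_apply _ _ hA.measurableSet,
      hμ.outerMeasure_of_isOpen hsub hA]
  · rw [toMeasure, MeasureTheory.toMeasure_apply _ _ hA.measurableSet,
      hμ.outerMeasure_of_isClosed hsub hA]

end IsDTM

theorem dtm_subadditive_extends_to_measure_general
    [TopologicalSpace X] [T2Space X]
    [MeasurableSpace X] [BorelSpace X]
    (μ : Set X → ℝ≥0∞) (hμ : IsDTM μ)
    (hsub : ∀ U V : Set X, IsOpen U → IsOpen V → μ (U ∪ V) ≤ μ U + μ V) :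
    ∃ m : Measure X,
      (∀ E : Set X, MeasurableSet E →
        m E = ⨅ (U : Set X) (_ : IsOpen U ∧ E ⊆ U), m U) ∧
      (∀ U : Set X, IsOpen U →
        m U = ⨆ (K : Set X) (_ : IsCompact K ∧ K ⊆ U), m K) ∧
      (∀ A : Set X, IsOpen A ∨ IsClosed A → m A = μ A) ∧
      (∀ m₂ : Measure X,
        (∀ E : Set X, MeasurableSet E →
          m₂ E = ⨅ (U : Set X) (_ : IsOpen U ∧ E ⊆ U), m₂ U) →
        (∀ U : Set X, IsOpen U →
          m₂ U = ⨆ (K : Set X) (_ : IsCompact K ∧ K ⊆ U), m₂ K) →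
        (∀ A : Set X, IsOpen A ∨ IsClosed A → m₂ A = μ A) →
        ∀ E : Set X, MeasurableSet E → m₂ E = m E) ∧
      ((∀ K : Set X, IsCompact K → m K ≠ ⊤) ↔ (∀ K : Set X, IsCompact K → μ K ≠ ⊤)) := by
  have hm : ∀ {A : Set X}, IsOpen A ∨ IsClosed A → hμ.toMeasure hsub A = μ A :=
    hμ.toMeasure_of_isOpen_or_isClosed hsub
  refine ⟨hμ.toMeasure hsub, fun E hE => ?_, fun U hU => ?_, fun A hA => hm hA,
    fun m₂ hout₂ _ hm₂ E hE => ?_, forall₂_congr fun K hK => by rw [hm (.inr hK.isClosed)]⟩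
  · rw [hμ.toMeasure_apply hsub hE]
    exact biInf_congr fun U hU => (hm (.inl hU.1)).symm
  · rw [hm (.inl hU), hμ.eq_iSup_of_isOpen hU]
    exact biSup_congr fun K hK => (hm (.inr hK.1.isClosed)).symm
  · rw [hout₂ E hE, hμ.toMeasure_apply hsub hE]
    exact biInf_congr fun U hU => hm₂ U (.inl hU.1)

/-- Theorem 4.6: a deficient topological measure `μ` on a locally compact Hausdorff space
that is finitely subadditive on open sets admits a unique extension to a Borel measure `m`
that is outer regular on all Borel sets and inner compact regular on open sets; `m` agrees
with `μ` on open and closed sets, and `m` is compact-finite (hence a Radon measure) iff `μ`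
is compact-finite. -/
theorem dtm_subadditive_extends_to_measure
    [TopologicalSpace X] [LocallyCompactSpace X] [T2Space X]
    [MeasurableSpace X] [BorelSpace X]
    (μ : Set X → ℝ≥0∞) (hμ : IsDTM μ)
    (hsub : ∀ U V : Set X, IsOpen U → IsOpen V → μ (U ∪ V) ≤ μ U + μ V) :
    ∃ m : Measure X,
      (∀ E : Set X, MeasurableSet E →
        m E = ⨅ (U : Set X) (_ : IsOpen U ∧ E ⊆ U), m U) ∧
      (∀ U : Set X, IsOpen U →
        m U = ⨆ (K : Set X) (_ : IsCompact K ∧ K ⊆ U), m K) ∧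
      (∀ A : Set X, IsOpen A ∨ IsClosed A → m A = μ A) ∧
      (∀ m₂ : Measure X,
        (∀ E : Set X, MeasurableSet E →
          m₂ E = ⨅ (U : Set X) (_ : IsOpen U ∧ E ⊆ U), m₂ U) →
        (∀ U : Set X, IsOpen U →
          m₂ U = ⨆ (K : Set X) (_ : IsCompact K ∧ K ⊆ U), m₂ K) →
        (∀ A : Set X, IsOpen A ∨ IsClosed A → m₂ A = μ A) →
        ∀ E : Set X, MeasurableSet E → m₂ E = m E) ∧
      ((∀ K : Set X, IsCompact K → m K ≠ ⊤) ↔ (∀ K : Set X, IsCompact K → μ K ≠ ⊤)) :=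
  dtm_subadditive_extends_to_measure_general μ hμ hsub
end

section
/- Let X be a compact Hausdorff space, Y a locally compact Hausdorff space, ν a deficient topological measure on X, and f : X → Y a continuous map. Then the set function A ↦ ν(f⁻¹(A)), defined on the open and closed subsets of Y, is a deficient topological measure on Y. If moreover ν is a topological measure on X, then A ↦ ν(f⁻¹(A)) is a topological measure on Y. -/
open Set Classical
open scoped ENNReal NNReal

variable {X : Type*}

/-- A topological measure on a locally compact space `X`: a set function on open and closed
subsets of `X` with values in `[0,∞]`, not identically `∞`, additive on disjoint sets `A, B`
whenever `A`, `B` and `A ⊔ B` each belong to the union of the collections of compact and open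
sets, inner compact regular on open sets, and outer regular on closed sets. -/
def IsTM [TopologicalSpace X] (μ : Set X → ℝ≥0∞) : Prop :=
  (∃ A : Set X, (IsOpen A ∨ IsClosed A) ∧ μ A ≠ ⊤) ∧
  (∀ A B : Set X, (IsCompact A ∨ IsOpen A) → (IsCompact B ∨ IsOpen B) →
    (IsCompact (A ∪ B) ∨ IsOpen (A ∪ B)) → Disjoint A B → μ (A ∪ B) = μ A + μ B) ∧
  (∀ U : Set X, IsOpen U → μ U = ⨆ (K : Set X) (_ : IsCompact K ∧ K ⊆ U), μ K) ∧
  (∀ F : Set X, IsClosed F → μ F = ⨅ (U : Set X) (_ : IsOpen U ∧ F ⊆ U), μ U)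

/-- On a compact space, a set function that is inner compact regular on open sets and
outer regular on closed sets is monotone on open-or-closed sets. -/
lemma dtm_mono [TopologicalSpace X] [CompactSpace X] (ν : Set X → ℝ≥0∞)
    (hsup : ∀ U : Set X, IsOpen U → ν U = ⨆ (K : Set X) (_ : IsCompact K ∧ K ⊆ U), ν K)
    (hinf : ∀ F : Set X, IsClosed F → ν F = ⨅ (U : Set X) (_ : IsOpen U ∧ F ⊆ U), ν U)
    {A B : Set X} (hA : IsOpen A ∨ IsClosed A) (hB : IsOpen B ∨ IsClosed B)
    (hAB : A ⊆ B) : ν A ≤ ν B := by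
  have key : ∀ A U : Set X, (IsOpen A ∨ IsClosed A) → IsOpen U → A ⊆ U → ν A ≤ ν U := by
    intro A U hA hU hsub
    rw [hsup U hU]
    rcases hA with ho | hc
    · rw [hsup A ho]
      refine iSup_le fun K => iSup_le fun hK => ?_
      exact le_iSup_of_le K (le_iSup_of_le ⟨hK.1, hK.2.trans hsub⟩ le_rfl)
    · exact le_iSup_of_le A (le_iSup_of_le ⟨hc.isCompact, hsub⟩ le_rfl)
  rcases hB with ho | hc
  · exact key A B hA ho hAB
  · rw [hinf B hc]
    exact le_iInf fun U => le_iInf fun hU => key A U hA hU.1 (hAB.trans hU.2)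

/-- Proposition 5.1: if `X` is compact Hausdorff, `Y` locally compact Hausdorff, `ν` a
deficient topological measure on `X` and `f : X → Y` continuous, then `A ↦ ν(f⁻¹(A))` is a
deficient topological measure on `Y`; if moreover `ν` is a topological measure, then so is
`A ↦ ν(f⁻¹(A))`. -/
theorem pushforward_dtm
    {Y : Type*} [TopologicalSpace X] [CompactSpace X] [T2Space X]
    [TopologicalSpace Y] [LocallyCompactSpace Y] [T2Space Y]
    (ν : Set X → ℝ≥0∞) (hν : IsDTM ν)
    (f : X → Y) (hf : Continuous f) :
    IsDTM (fun A : Set Y => ν (f ⁻¹' A)) ∧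
    (IsTM ν → IsTM (fun A : Set Y => ν (f ⁻¹' A))) := by
  obtain ⟨⟨A₀, hA₀, hA₀fin⟩, hadd, hsup, hinf⟩ := hν
  have mono := fun {A B : Set X} => dtm_mono ν hsup hinf (A := A) (B := B)
  -- ν ∅ = 0
  have hU₀ : ∃ U : Set X, IsOpen U ∧ ν U ≠ ⊤ := by
    rcases hA₀ with ho | hc
    · exact ⟨A₀, ho, hA₀fin⟩
    · rw [hinf A₀ hc] at hA₀fin
      by_contra h
      push_neg at h
      apply hA₀fin
      rw [iInf_eq_top]
      intro U
      rw [iInf_eq_top]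
      intro hU
      exact h U hU.1
  have hempty : ν ∅ = 0 := by
    obtain ⟨U, hU, hUfin⟩ := hU₀
    have hle : ν ∅ ≤ ν U := mono (Or.inl isOpen_empty) (Or.inl hU) (empty_subset U)
    have hfin : ν (∅ : Set X) ≠ ⊤ := fun h => hUfin (top_le_iff.mp (h ▸ hle))
    have h2 : ν ∅ = ν ∅ + ν ∅ := by
      have := hadd ∅ ∅ isCompact_empty isCompact_empty (disjoint_bot_left)
      rwa [union_self] at this
    nth_rewrite 1 [← zero_add (ν ∅)] at h2
    exact (WithTop.add_right_cancel hfin h2).symm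
  -- inner regularity of the pushforward
  have hsup' : ∀ U : Set Y, IsOpen U →
      ν (f ⁻¹' U) = ⨆ (K : Set Y) (_ : IsCompact K ∧ K ⊆ U), ν (f ⁻¹' K) := by
    intro U hU
    apply le_antisymm
    · rw [hsup (f ⁻¹' U) (hU.preimage hf)]
      refine iSup_le fun K => iSup_le fun hK => ?_
      refine le_iSup_of_le (f '' K) (le_iSup_of_le ⟨hK.1.image hf, image_subset_iff.mpr hK.2⟩ ?_)
      exact mono (Or.inr hK.1.isClosed)
        (Or.inr (((hK.1.image hf).isClosed).preimage hf)) (subset_preimage_image f K)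
    · refine iSup_le fun K => iSup_le fun hK => ?_
      exact mono (Or.inr (hK.1.isClosed.preimage hf)) (Or.inl (hU.preimage hf))
        (preimage_mono hK.2)
  -- outer regularity of the pushforward
  have hinf' : ∀ F : Set Y, IsClosed F →
      ν (f ⁻¹' F) = ⨅ (U : Set Y) (_ : IsOpen U ∧ F ⊆ U), ν (f ⁻¹' U) := by
    intro F hF
    apply le_antisymm
    · exact le_iInf fun U => le_iInf fun hU =>
        mono (Or.inr (hF.preimage hf)) (Or.inl (hU.1.preimage hf)) (preimage_mono hU.2)
    · rw [hinf (f ⁻¹' F) (hF.preimage hf)]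
      refine le_iInf fun V => le_iInf fun hV => ?_
      set C : Set Y := f '' Vᶜ with hC
      have hCcl : IsClosed C := ((hV.1.isClosed_compl.isCompact).image hf).isClosed
      have hFU : F ⊆ Cᶜ := by
        intro y hy hyC
        obtain ⟨x, hxV, hxy⟩ := hyC
        exact hxV (hV.2 (by simpa [hxy] using hy : x ∈ f ⁻¹' F))
      have hpre : f ⁻¹' Cᶜ ⊆ V := by
        intro x hx
        by_contra hxV
        exact hx (mem_image_of_mem f hxV)
      refine iInf_le_of_le Cᶜ (iInf_le_of_le ⟨hCcl.isOpen_compl, hFU⟩ ?_)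
      exact mono (Or.inl (hCcl.isOpen_compl.preimage hf)) (Or.inl hV.1) hpre
  constructor
  · refine ⟨⟨∅, Or.inl isOpen_empty, ?_⟩, ?_, hsup', hinf'⟩
    · simp [hempty]
    · intro C K hC hK hd
      simp only [preimage_union]
      exact hadd (f ⁻¹' C) (f ⁻¹' K) (hC.isClosed.preimage hf).isCompact
        (hK.isClosed.preimage hf).isCompact (hd.preimage f)
  · rintro ⟨-, hadd', -, -⟩
    refine ⟨⟨∅, Or.inl isOpen_empty, ?_⟩, ?_, hsup', hinf'⟩
    · simp [hempty]
    · intro A B hA hB hAB hd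
      simp only [preimage_union]
      have pre : ∀ S : Set Y, (IsCompact S ∨ IsOpen S) →
          (IsCompact (f ⁻¹' S) ∨ IsOpen (f ⁻¹' S)) := by
        rintro S (h | h)
        · exact Or.inl (h.isClosed.preimage hf).isCompact
        · exact Or.inr (h.preimage hf)
      have := hadd' (f ⁻¹' A) (f ⁻¹' B) (pre A hA) (pre B hB)
        (by rw [← preimage_union]; exact pre _ hAB) (hd.preimage f)
      exact this
end

section
/- Let X be a locally compact Hausdorff space, μ a deficient topological measure on X, and V an open subset of X. Define μ_V on open and closed subsets of X by μ_V(U) = μ(U ∩ V) for open U, and μ_V(F) = inf{μ_V(U) : F ⊆ U, U open} for closed F. Then μ_V is a deficient topological measure on X. -/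
open Set Classical
open scoped ENNReal NNReal

variable {X : Type*}

/-- The restriction of a deficient topological measure `μ` to an open set `V`:
`μ_V(U) = μ(U ∩ V)` for open `U`, and `μ_V(F) = inf{μ_V(U) : F ⊆ U, U open}` for other
(in particular closed) sets. -/
noncomputable def dtmRestrictOpen [TopologicalSpace X] (μ : Set X → ℝ≥0∞) (V : Set X)
    (A : Set X) : ℝ≥0∞ :=
  if IsOpen A then μ (A ∩ V)
  else ⨅ (U : Set X) (_ : IsOpen U ∧ A ⊆ U), μ (U ∩ V)

section Aux

variable [TopologicalSpace X] {μ : Set X → ℝ≥0∞}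

/-- Compact sets get no more measure than open sets containing them. -/
lemma dtm_compact_le_open
    (hinner : ∀ U : Set X, IsOpen U → μ U = ⨆ (K : Set X) (_ : IsCompact K ∧ K ⊆ U), μ K)
    {K U : Set X} (hK : IsCompact K) (hU : IsOpen U) (hKU : K ⊆ U) : μ K ≤ μ U := by
  rw [hinner U hU]
  exact le_iSup₂ (f := fun (K : Set X) (_ : IsCompact K ∧ K ⊆ U) => μ K) K ⟨hK, hKU⟩

/-- Monotonicity on open sets. -/
lemma dtm_mono_open
    (hinner : ∀ U : Set X, IsOpen U → μ U = ⨆ (K : Set X) (_ : IsCompact K ∧ K ⊆ U), μ K)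
    {U W : Set X} (hU : IsOpen U) (hW : IsOpen W) (hUW : U ⊆ W) : μ U ≤ μ W := by
  rw [hinner U hU]
  exact iSup₂_le fun K hK => dtm_compact_le_open hinner hK.1 hW (hK.2.trans hUW)

/-- Superadditivity over disjoint open sets inside a bigger open set. -/
lemma dtm_superadd_open
    (hadd : ∀ C K : Set X, IsCompact C → IsCompact K → Disjoint C K → μ (C ∪ K) = μ C + μ K)
    (hinner : ∀ U : Set X, IsOpen U → μ U = ⨆ (K : Set X) (_ : IsCompact K ∧ K ⊆ U), μ K)
    {W₁ W₂ W : Set X} (hW₁ : IsOpen W₁) (hW₂ : IsOpen W₂) (hW : IsOpen W)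
    (hd : Disjoint W₁ W₂) (h₁ : W₁ ⊆ W) (h₂ : W₂ ⊆ W) : μ W₁ + μ W₂ ≤ μ W := by
  have e₁ : μ W₁ = ⨆ K : {K : Set X // IsCompact K ∧ K ⊆ W₁}, μ K := by
    rw [hinner W₁ hW₁, iSup_subtype]
  have e₂ : μ W₂ = ⨆ K : {K : Set X // IsCompact K ∧ K ⊆ W₂}, μ K := by
    rw [hinner W₂ hW₂, iSup_subtype]
  rw [e₁, e₂]
  have : Nonempty {K : Set X // IsCompact K ∧ K ⊆ W₁} :=
    ⟨⟨∅, isCompact_empty, empty_subset _⟩⟩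
  have : Nonempty {K : Set X // IsCompact K ∧ K ⊆ W₂} :=
    ⟨⟨∅, isCompact_empty, empty_subset _⟩⟩
  refine ENNReal.iSup_add_iSup_le fun K₁ K₂ => ?_
  have hdk : Disjoint (K₁ : Set X) (K₂ : Set X) :=
    hd.mono K₁.2.2 K₂.2.2
  rw [← hadd _ _ K₁.2.1 K₂.2.1 hdk]
  exact dtm_compact_le_open hinner (K₁.2.1.union K₂.2.1) hW
    (union_subset (K₁.2.2.trans h₁) (K₂.2.2.trans h₂))

/-- Subadditivity over two disjoint open sets. -/
lemma dtm_subadd_open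
    (hadd : ∀ C K : Set X, IsCompact C → IsCompact K → Disjoint C K → μ (C ∪ K) = μ C + μ K)
    (hinner : ∀ U : Set X, IsOpen U → μ U = ⨆ (K : Set X) (_ : IsCompact K ∧ K ⊆ U), μ K)
    {W₁ W₂ : Set X} (hW₁ : IsOpen W₁) (hW₂ : IsOpen W₂)
    (hd : Disjoint W₁ W₂) : μ (W₁ ∪ W₂) ≤ μ W₁ + μ W₂ := by
  rw [hinner _ (hW₁.union hW₂)]
  refine iSup₂_le fun T hT => ?_
  set T₁ : Set X := T ∩ W₂ᶜ with hT₁def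
  set T₂ : Set X := T ∩ W₁ᶜ with hT₂def
  have hT₁ : IsCompact T₁ := hT.1.inter_right hW₂.isClosed_compl
  have hT₂ : IsCompact T₂ := hT.1.inter_right hW₁.isClosed_compl
  have hsub₁ : T₁ ⊆ W₁ := by
    intro x hx
    rcases hT.2 hx.1 with h | h
    · exact h
    · exact absurd h hx.2
  have hsub₂ : T₂ ⊆ W₂ := by
    intro x hx
    rcases hT.2 hx.1 with h | h
    · exact absurd h hx.2
    · exact h
  have hdisj : Disjoint T₁ T₂ := hd.mono hsub₁ hsub₂
  have hunion : T₁ ∪ T₂ = T := by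
    apply Subset.antisymm (union_subset inter_subset_left inter_subset_left)
    intro x hx
    by_cases hxW₂ : x ∈ W₂
    · exact Or.inr ⟨hx, disjoint_right.mp hd hxW₂⟩
    · exact Or.inl ⟨hx, hxW₂⟩
  calc μ T = μ (T₁ ∪ T₂) := by rw [hunion]
    _ = μ T₁ + μ T₂ := hadd _ _ hT₁ hT₂ hdisj
    _ ≤ μ W₁ + μ W₂ := by
        exact add_le_add (dtm_compact_le_open hinner hT₁ hW₁ hsub₁)
          (dtm_compact_le_open hinner hT₂ hW₂ hsub₂)

end Aux

/-- Theorem 5.8: if `μ` is a deficient topological measure on a locally compact Hausdorff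
space `X` and `V ⊆ X` is open, then `μ_V` (given by `μ_V(U) = μ(U ∩ V)` on open sets and by
outer regularization on closed sets) is a deficient topological measure on `X`. -/
theorem dtmRestrictOpen_isDTM
    [TopologicalSpace X] [LocallyCompactSpace X] [T2Space X]
    (μ : Set X → ℝ≥0∞) (hμ : IsDTM μ)
    (V : Set X) (hV : IsOpen V) :
    IsDTM (dtmRestrictOpen μ V) := by
  obtain ⟨⟨A, hA, hAne⟩, hadd, hinner, houter⟩ := hμ
  set ν := dtmRestrictOpen μ V with hν
  -- `ν` is given by outer regularization on all sets
  have hνinf : ∀ B : Set X, ν B = ⨅ (U : Set X) (_ : IsOpen U ∧ B ⊆ U), μ (U ∩ V) := by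
    intro B
    by_cases hB : IsOpen B
    · rw [hν, dtmRestrictOpen, if_pos hB]
      apply le_antisymm
      · exact le_iInf₂ fun U hU => dtm_mono_open hinner (hB.inter hV) (hU.1.inter hV)
          (inter_subset_inter_left V hU.2)
      · exact iInf₂_le B ⟨hB, Subset.rfl⟩
    · rw [hν, dtmRestrictOpen, if_neg hB]
  have hνopen : ∀ U : Set X, IsOpen U → ν U = μ (U ∩ V) := by
    intro U hU
    rw [hν, dtmRestrictOpen, if_pos hU]
  refine ⟨?_, ?_, ?_, ?_⟩
  · -- not identically ⊤
    refine ⟨∅, Or.inl isOpen_empty, ?_⟩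
    rw [hνopen ∅ isOpen_empty, empty_inter]
    -- there is an open set of finite measure
    obtain ⟨U, hU, hUne⟩ : ∃ U : Set X, IsOpen U ∧ μ U ≠ ⊤ := by
      rcases hA with hA | hA
      · exact ⟨A, hA, hAne⟩
      · have := houter A hA
        rw [this] at hAne
        have hlt : (⨅ (U : Set X) (_ : IsOpen U ∧ A ⊆ U), μ U) < ⊤ := hAne.lt_top
        rw [iInf_lt_iff] at hlt
        obtain ⟨U, hU⟩ := hlt
        rw [iInf_lt_iff] at hU
        obtain ⟨hUo, hUlt⟩ := hU
        exact ⟨U, hUo.1, hUlt.ne⟩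
    exact fun h => hUne (top_le_iff.mp
      (h ▸ dtm_compact_le_open hinner isCompact_empty hU (empty_subset U)))
  · -- additivity on disjoint compact sets
    intro C K hC hK hCK
    obtain ⟨O₁, O₂, hO₁, hO₂, hCO₁, hKO₂, hOd⟩ :=
      SeparatedNhds.of_isCompact_isCompact hC hK hCK
    apply le_antisymm
    · -- ν (C ∪ K) ≤ ν C + ν K
      rw [hνinf C, hνinf K, iInf_subtype', iInf_subtype', ENNReal.iInf_add]
      refine le_iInf fun U₁ => ?_
      rw [ENNReal.add_iInf]
      refine le_iInf fun U₂ => ?_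
      · -- shrink to disjoint opens
        set W₁ : Set X := (U₁ : Set X) ∩ O₁
        set W₂ : Set X := (U₂ : Set X) ∩ O₂
        have hW₁ : IsOpen W₁ := U₁.2.1.inter hO₁
        have hW₂ : IsOpen W₂ := U₂.2.1.inter hO₂
        have hWd : Disjoint W₁ W₂ := hOd.mono inter_subset_right inter_subset_right
        have hCWK : C ∪ K ⊆ W₁ ∪ W₂ :=
          union_subset (fun x hx => Or.inl ⟨U₁.2.2 hx, hCO₁ hx⟩)
            (fun x hx => Or.inr ⟨U₂.2.2 hx, hKO₂ hx⟩)
        calc ν (C ∪ K) ≤ μ ((W₁ ∪ W₂) ∩ V) := by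
              rw [hνinf (C ∪ K)]
              exact iInf₂_le (W₁ ∪ W₂) ⟨hW₁.union hW₂, hCWK⟩
          _ ≤ μ (W₁ ∩ V) + μ (W₂ ∩ V) := by
              rw [union_inter_distrib_right]
              exact dtm_subadd_open hadd hinner (hW₁.inter hV) (hW₂.inter hV)
                (hWd.mono inter_subset_left inter_subset_left)
          _ ≤ μ ((U₁ : Set X) ∩ V) + μ ((U₂ : Set X) ∩ V) :=
              add_le_add
                (dtm_mono_open hinner (hW₁.inter hV) (U₁.2.1.inter hV)
                  (inter_subset_inter_left V inter_subset_left))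
                (dtm_mono_open hinner (hW₂.inter hV) (U₂.2.1.inter hV)
                  (inter_subset_inter_left V inter_subset_left))
    · -- ν C + ν K ≤ ν (C ∪ K)
      rw [hνinf (C ∪ K)]
      refine le_iInf₂ fun U hU => ?_
      have h₁ : ν C ≤ μ ((U ∩ O₁) ∩ V) := by
        rw [hνinf C]
        exact iInf₂_le (U ∩ O₁) ⟨hU.1.inter hO₁,
          fun x hx => ⟨hU.2 (Or.inl hx), hCO₁ hx⟩⟩
      have h₂ : ν K ≤ μ ((U ∩ O₂) ∩ V) := by
        rw [hνinf K]
        exact iInf₂_le (U ∩ O₂) ⟨hU.1.inter hO₂,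
          fun x hx => ⟨hU.2 (Or.inr hx), hKO₂ hx⟩⟩
      refine le_trans (add_le_add h₁ h₂) ?_
      exact dtm_superadd_open hadd hinner ((hU.1.inter hO₁).inter hV)
        ((hU.1.inter hO₂).inter hV) (hU.1.inter hV)
        (hOd.mono (inter_subset_left.trans inter_subset_right)
          (inter_subset_left.trans inter_subset_right))
        (inter_subset_inter_left V inter_subset_left)
        (inter_subset_inter_left V inter_subset_left)
  · -- inner regularity on open sets
    intro U hU
    apply le_antisymm
    · rw [hνopen U hU, hinner (U ∩ V) (hU.inter hV)]
      refine iSup₂_le fun K hK => ?_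
      have hKle : μ K ≤ ν K := by
        rw [hνinf K]
        refine le_iInf₂ fun W hW => ?_
        exact dtm_compact_le_open hinner hK.1 (hW.1.inter hV)
          (subset_inter hW.2 (hK.2.trans inter_subset_right))
      refine le_trans hKle ?_
      exact le_iSup₂ (f := fun (K : Set X) (_ : IsCompact K ∧ K ⊆ U) => ν K) K
        ⟨hK.1, hK.2.trans inter_subset_left⟩
    · refine iSup₂_le fun K hK => ?_
      rw [hνinf K, hνopen U hU]
      exact iInf₂_le U ⟨hU, hK.2⟩
  · -- outer regularity on closed sets
    intro F _
    rw [hνinf F]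
    apply le_antisymm
    · refine le_iInf₂ fun U hU => ?_
      rw [hνopen U hU.1]
      exact iInf₂_le U hU
    · refine le_iInf₂ fun U hU => ?_
      rw [← hνopen U hU.1]
      exact iInf₂_le U hU
end
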